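/- Let n be even and suppose (⌊log₂ n⌋ + 1) divides n. If γ(KG_n) = n/(⌊log₂ n⌋ + 1), then this quantity is an even integer, and every minimum dominating set of KG_n contains equally many even and odd vertices. -/

import Mathlib

/-! Let `k = ⌊log₂ n⌋` and let `D` be a dominating set with `e` even and `o` odd vertices. An even
vertex is dominated by itself or by an odd vertex of `D`, and each vertex has at most `k`
neighbours, so `n / 2 ≤ e + k o`; symmetrically `n / 2 ≤ o + k e`. If `e + o = n / (k + 1)` the two
bounds add up to exactly `n`, so both are equalities and `(k - 1)(e - o) = 0`. As `k ≥ 2`, `e = o`,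
and then `|D| = 2e` is even. -/

/-- The Knödel graph on `n` vertices (for even `n ≥ 6`): `x ~ y` iff
`x + y ≡ 2^t - 1 (mod n)` for some `1 ≤ t ≤ ⌊log₂ n⌋`. -/
def knodel (n : ℕ) : SimpleGraph (ZMod n) where
  Adj x y := x ≠ y ∧ ∃ t : ℕ, 1 ≤ t ∧ t ≤ Nat.log 2 n ∧ x + y = 2 ^ t - 1
  symm := ⟨by
    rintro x y ⟨hxy, t, h1, h2, h3⟩
    exact ⟨hxy.symm, t, h1, h2, by rw [add_comm]; exact h3⟩⟩
  loopless := ⟨fun x h => h.1 rfl⟩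

/-- The domination number of a finite graph. -/
noncomputable def dominationNumber {V : Type*} [Fintype V] (G : SimpleGraph V) : ℕ :=
  sInf {k | ∃ D : Finset V, (∀ v, v ∉ D → ∃ u ∈ D, G.Adj u v) ∧ D.card = k}

namespace SimpleGraph

variable {V : Type*} (G : SimpleGraph V)

def IsDominatingSet (D : Finset V) : Prop :=
  ∀ v ∉ D, ∃ u ∈ D, G.Adj u v

variable {G} [Fintype V]

lemma exists_isDominatingSet_card_eq_dominationNumber :
    ∃ D : Finset V, G.IsDominatingSet D ∧ D.card = dominationNumber G :=
  Nat.sInf_mem (s := {k | ∃ D : Finset V, G.IsDominatingSet D ∧ D.card = k})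
    ⟨_, Finset.univ, fun v hv => absurd (Finset.mem_univ v) hv, rfl⟩

variable [DecidableRel G.Adj] {D : Finset V} {p : V → Prop} [DecidablePred p] {k : ℕ}

lemma card_filter_le_of_isDominatingSet (hD : G.IsDominatingSet D)
    (hp : G.IsIndepSet {v | p v}) (hk : ∀ v, G.degree v ≤ k) :
    (Finset.univ.filter p).card ≤ (D.filter p).card + (D.filter (¬ p ·)).card * k := by
  classical
  have hcover : Finset.univ.filter p ⊆
      D.filter p ∪ (D.filter (¬ p ·)).biUnion (fun u => G.neighborFinset u) := by
    intro v hv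
    rw [Finset.mem_filter] at hv
    by_cases hvD : v ∈ D
    · exact Finset.mem_union_left _ (Finset.mem_filter.2 ⟨hvD, hv.2⟩)
    obtain ⟨u, huD, huv⟩ := hD v hvD
    have hu : ¬ p u := fun hu => hp hu hv.2 huv.ne huv
    exact Finset.mem_union_right _ (Finset.mem_biUnion.2
      ⟨u, Finset.mem_filter.2 ⟨huD, hu⟩, (G.mem_neighborFinset u v).2 huv⟩)
  calc (Finset.univ.filter p).card
      ≤ (D.filter p ∪ (D.filter (¬ p ·)).biUnion (fun u => G.neighborFinset u)).card :=
        Finset.card_le_card hcover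
    _ ≤ (D.filter p).card + ((D.filter (¬ p ·)).biUnion (fun u => G.neighborFinset u)).card :=
        Finset.card_union_le _ _
    _ ≤ (D.filter p).card + (D.filter (¬ p ·)).card * k := by
        gcongr
        exact Finset.card_biUnion_le_card_mul _ _ _ fun u _ => hk u

theorem card_filter_eq_card_filter_not_of_isDominatingSet (hD : G.IsDominatingSet D)
    (hp : G.IsIndepSet {v | p v}) (hnp : G.IsIndepSet {v | ¬ p v})
    (hbal : (Finset.univ.filter p).card = (Finset.univ.filter (¬ p ·)).card)
    (hk : ∀ v, G.degree v ≤ k) (hk1 : k ≠ 1)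
    (hcard : D.card * (k + 1) = Fintype.card V) :
    (D.filter p).card = (D.filter (¬ p ·)).card := by
  have hP := card_filter_le_of_isDominatingSet hD hp hk
  have hN := card_filter_le_of_isDominatingSet (p := (¬ p ·)) hD hnp hk
  simp only [not_not] at hN
  have hV := Finset.card_filter_add_card_filter_not (s := Finset.univ) p
  have hDsplit := Finset.card_filter_add_card_filter_not (s := D) p
  rw [Finset.card_univ] at hV
  set a := (D.filter p).card
  set b := (D.filter (¬ p ·)).card
  have htight : a + b * k = b + a * k := by
    have : (a + b * k) + (b + a * k) = Fintype.card V := by rw [← hcard, ← hDsplit]; ring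
    omega
  have hfactor : ((k : ℤ) - 1) * (a - b) = 0 := by
    have : ((a + b * k : ℕ) : ℤ) = b + a * k := by exact_mod_cast htight
    push_cast at this
    linear_combination -this
  rcases mul_eq_zero.1 hfactor with h | h
  · exact absurd (by linarith : (k : ℤ) = 1) (by exact_mod_cast hk1)
  · linarith

end SimpleGraph

open SimpleGraph

namespace knodel

variable {n : ℕ}

lemma castHom_add_eq_one_of_adj (hn : 2 ∣ n) {x y : ZMod n} (h : (knodel n).Adj x y) :
    ZMod.castHom hn (ZMod 2) x + ZMod.castHom hn (ZMod 2) y = 1 := by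
  obtain ⟨-, t, ht, -, hxy⟩ := h
  obtain ⟨s, rfl⟩ : ∃ s, t = s + 1 := ⟨t - 1, by omega⟩
  rw [← map_add, hxy, map_sub, map_pow, map_one, map_ofNat, pow_succ,
    show (2 : ZMod 2) = 0 from rfl, mul_zero]
  decide

variable [NeZero n]

/-- For even `n`, reduction mod 2 is a ring homomorphism; this turns parity arguments about
`x.val` into computations in `ZMod 2`. -/
lemma even_val_iff_castHom_eq_zero (hn : 2 ∣ n) (x : ZMod n) :
    Even x.val ↔ ZMod.castHom hn (ZMod 2) x = 0 := by
  rw [ZMod.castHom_apply, ZMod.cast_eq_val, ZMod.natCast_eq_zero_iff_even]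

lemma even_val_iff_not_even_val_of_adj (hn : Even n) {x y : ZMod n} (h : (knodel n).Adj x y) :
    Even x.val ↔ ¬ Even y.val := by
  have hsum := castHom_add_eq_one_of_adj hn.two_dvd h
  rw [even_val_iff_castHom_eq_zero hn.two_dvd, even_val_iff_castHom_eq_zero hn.two_dvd]
  revert hsum
  generalize ZMod.castHom hn.two_dvd (ZMod 2) x = a
  generalize ZMod.castHom hn.two_dvd (ZMod 2) y = b
  revert a b
  decide

lemma isIndepSet_even_val (hn : Even n) : (knodel n).IsIndepSet {v | Even v.val} :=
  fun _ hx _ hy _ hxy => (even_val_iff_not_even_val_of_adj hn hxy).1 hx hy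

lemma isIndepSet_not_even_val (hn : Even n) : (knodel n).IsIndepSet {v | ¬ Even v.val} :=
  fun _ hx _ hy _ hxy => hx ((even_val_iff_not_even_val_of_adj hn hxy).2 hy)

/-- `x ↦ x + 1` flips the parity of `x.val`, since it flips the residue mod 2. -/
lemma card_filter_even_val_eq (hn : Even n) :
    (Finset.univ.filter fun v : ZMod n => Even v.val).card =
      (Finset.univ.filter fun v : ZMod n => ¬ Even v.val).card := by
  refine Finset.card_equiv (Equiv.addRight 1) fun x => ?_
  simp only [Finset.mem_filter, Finset.mem_univ, true_and, Equiv.coe_addRight,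
    even_val_iff_castHom_eq_zero hn.two_dvd, map_add, map_one]
  generalize ZMod.castHom hn.two_dvd (ZMod 2) x = a
  revert a
  decide

lemma degree_le [DecidableRel (knodel n).Adj] (u : ZMod n) :
    (knodel n).degree u ≤ Nat.log 2 n := by
  have hsub : (knodel n).neighborFinset u ⊆
      (Finset.Icc 1 (Nat.log 2 n)).image fun t => (2 : ZMod n) ^ t - 1 - u := by
    intro y hy
    obtain ⟨-, t, ht1, ht2, hsum⟩ := (mem_neighborFinset _ _ _).1 hy
    exact Finset.mem_image.2 ⟨t, Finset.mem_Icc.2 ⟨ht1, ht2⟩, by rw [← hsum]; ring⟩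
  calc (knodel n).degree u
      ≤ ((Finset.Icc 1 (Nat.log 2 n)).image fun t => (2 : ZMod n) ^ t - 1 - u).card := by
        rw [← card_neighborFinset_eq_degree]; exact Finset.card_le_card hsub
    _ ≤ (Finset.Icc 1 (Nat.log 2 n)).card := Finset.card_image_le
    _ = Nat.log 2 n := by simp

end knodel

theorem stmt_11 (n : ℕ) [NeZero n] (hn6 : 6 ≤ n) (hne : Even n)
    (hdvd : (Nat.log 2 n + 1) ∣ n)
    (hgam : dominationNumber (knodel n) = n / (Nat.log 2 n + 1)) :
    Even (n / (Nat.log 2 n + 1)) ∧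
    ∀ D : Finset (ZMod n), (∀ v, v ∉ D → ∃ u ∈ D, (knodel n).Adj u v) →
      D.card = dominationNumber (knodel n) →
      (D.filter (fun x => Even x.val)).card = (D.filter (fun x => Odd x.val)).card := by
  classical
  have hlog : 2 ≤ Nat.log 2 n := Nat.le_log_of_pow_le (by norm_num) (by omega)
  have hbalanced : ∀ D : Finset (ZMod n), (knodel n).IsDominatingSet D →
      D.card = dominationNumber (knodel n) →
      (D.filter (fun x => Even x.val)).card = (D.filter (fun x => Odd x.val)).card := by
    intro D hD hcard
    simpa only [Nat.not_even_iff_odd] using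
      card_filter_eq_card_filter_not_of_isDominatingSet hD (knodel.isIndepSet_even_val hne)
        (knodel.isIndepSet_not_even_val hne) (knodel.card_filter_even_val_eq hne)
        knodel.degree_le (by omega)
        (by rw [hcard, hgam, ZMod.card]; exact Nat.div_mul_cancel hdvd)
  refine ⟨?_, hbalanced⟩
  obtain ⟨D, hD, hcard⟩ := exists_isDominatingSet_card_eq_dominationNumber (G := knodel n)
  have hsplit := Finset.card_filter_add_card_filter_not (s := D) fun x => Even x.val
  simp only [Nat.not_even_iff_odd, ← hbalanced D hD hcard, hcard, hgam] at hsplit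
  exact ⟨_, hsplit.symm⟩
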